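/- arXiv:2403.06143 — 5 statements merged into one kernel-verified Lean document; each statement's English description precedes it below -/
import Mathlib

section
/- Let F be a finite field, let κ ≥ 1, let s ∈ F, let 0 ≤ t ≤ κ − 1, and let u_1, …, u_t be pairwise distinct nonzero elements of F. Consider the map Φ sending each polynomial f ∈ F[X] with deg f < κ and f(0) = s to the share vector (f(u_1), …, f(u_t)) ∈ F^t. Then every fiber of Φ has cardinality |F|^{κ−1−t}; in particular Φ is surjective, and for t = κ − 1 it is a bijection. Consequently, for a uniformly random such polynomial, the distribution of any t ≤ κ − 1 shares is uniform on F^t and independent of the secret s. (Perfect security of Shamir's secret sharing: fewer than κ shares reveal nothing about the secret.) -/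
open Polynomial

/-- Perfect security of Shamir's secret sharing: over a finite field `F`, for any secret `s`,
any `t ≤ κ - 1` pairwise distinct nonzero evaluation points, and any prospective share vector
`v : Fin t → F`, the number of polynomials `f` with `deg f < κ`, `f 0 = s` and `f (u j) = v j`
for all `j` is exactly `|F| ^ (κ - 1 - t)`.  In particular the share map is surjective
(bijective when `t = κ - 1`), so any `t < κ` shares of a uniformly random sharing polynomial
are uniform on `F^t`, independently of the secret `s`. -/
theorem shamir_share_fiber_card {F : Type*} [Field F] [Fintype F]
    (κ t : ℕ) (hκ : 1 ≤ κ) (ht : t ≤ κ - 1) (s : F)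
    (u : Fin t → F) (hinj : Function.Injective u) (hne : ∀ j, u j ≠ 0)
    (v : Fin t → F) :
    Nat.card {f : Polynomial F // f.degree < (κ : ℕ) ∧ f.eval 0 = s ∧
      ∀ j, f.eval (u j) = v j} = Fintype.card F ^ (κ - 1 - t) := by
  classical
  have htκ : t + 1 ≤ κ := by omega
  set w : Fin (t + 1) → F := Fin.cons 0 u with hw
  have hwinj : Function.Injective w :=
    Fin.cons_injective_of_injective (by
      rintro ⟨j, hj⟩; exact hne j hj) hinj
  set r : Fin (t + 1) → F := Fin.cons s v with hr
  set g : Polynomial F := Lagrange.interpolate Finset.univ w r with hg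
  have hgdeg : g.degree < ((t + 1 : ℕ) : WithBot ℕ) := by
    have h := Lagrange.degree_interpolate_lt (s := Finset.univ) (r := r) hwinj.injOn
    rwa [Finset.card_univ, Fintype.card_fin] at h
  have hgκ : g.degree < (κ : ℕ) :=
    hgdeg.trans_le (Nat.cast_le.mpr htκ)
  have hgeval : ∀ i, g.eval (w i) = r i := fun i =>
    Lagrange.eval_interpolate_at_node r hwinj.injOn (Finset.mem_univ i)
  set Z : Polynomial F := ∏ i : Fin (t + 1), (X - C (w i)) with hZ
  have hZmonic : Z.Monic := monic_prod_of_monic _ _ fun i _ => monic_X_sub_C _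
  have hZnat : Z.natDegree = t + 1 := by
    rw [hZ, natDegree_prod_of_monic _ _ fun i _ => monic_X_sub_C _]
    simp
  have hZdeg : Z.degree = ((t + 1 : ℕ) : WithBot ℕ) := by
    rw [degree_eq_natDegree hZmonic.ne_zero, hZnat]
  have hZroot : ∀ i, Z.eval (w i) = 0 := by
    intro i
    rw [hZ, eval_prod]
    exact Finset.prod_eq_zero (Finset.mem_univ i) (by simp)
  -- the bijection
  have key : ∀ q : Polynomial F, q.degree < ((κ - 1 - t : ℕ)) →
      (g + Z * q).degree < (κ : ℕ) ∧ (g + Z * q).eval 0 = s ∧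
        ∀ j, (g + Z * q).eval (u j) = v j := by
    intro q hq
    have hmul : (Z * q).degree < (κ : ℕ) := by
      rcases eq_or_ne q 0 with rfl | hq0
      · rw [mul_zero, degree_zero]; exact_mod_cast WithBot.bot_lt_coe κ
      · have hqn : q.natDegree < κ - 1 - t := (natDegree_lt_iff_degree_lt hq0).mpr hq
        rw [degree_mul, hZdeg, degree_eq_natDegree hq0, ← Nat.cast_add]
        exact Nat.cast_lt.mpr (by omega)
    refine ⟨(degree_add_le _ _).trans_lt (max_lt hgκ hmul), ?_, ?_⟩
    · have h0 : (0 : F) = w 0 := by simp [hw]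
      rw [eval_add, eval_mul, h0, hZroot, hgeval]
      simp [hr]
    · intro j
      have hj : u j = w j.succ := by simp [hw]
      rw [eval_add, eval_mul, hj, hZroot, hgeval]
      simp [hr]
  set φ : {q : Polynomial F // q.degree < ((κ - 1 - t : ℕ))} →
      {f : Polynomial F // f.degree < (κ : ℕ) ∧ f.eval 0 = s ∧
        ∀ j, f.eval (u j) = v j} :=
    fun q => ⟨g + Z * q.1, key q.1 q.2⟩ with hφ
  have hbij : Function.Bijective φ := by
    constructor
    · rintro ⟨q1, h1⟩ ⟨q2, h2⟩ h
      have hh : g + Z * q1 = g + Z * q2 := congrArg Subtype.val h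
      exact Subtype.ext (mul_left_cancel₀ hZmonic.ne_zero (add_left_cancel hh))
    · rintro ⟨f, hfdeg, hf0, hfu⟩
      have hfeval : ∀ i, f.eval (w i) = r i := by
        refine Fin.cases ?_ ?_
        · simpa [hw, hr] using hf0
        · intro j; simpa [hw, hr] using hfu j
      have hroot : ∀ i, (f - g).eval (w i) = 0 := fun i => by
        rw [eval_sub, hfeval, hgeval, sub_self]
      have hdvd : Z ∣ f - g := by
        rw [hZ]
        exact Fintype.prod_dvd_of_coprime
          (Polynomial.pairwise_coprime_X_sub_C hwinj)
          (fun i => dvd_iff_isRoot.mpr (hroot i))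
      obtain ⟨q, hq⟩ := hdvd
      have hqdeg : q.degree < ((κ - 1 - t : ℕ)) := by
        rcases eq_or_ne q 0 with rfl | hq0
        · rw [degree_zero]; exact_mod_cast WithBot.bot_lt_coe (κ - 1 - t)
        · have hfg : (f - g).degree < (κ : ℕ) :=
            (degree_sub_le _ _).trans_lt (max_lt hfdeg hgκ)
          rw [hq, degree_mul, hZdeg, degree_eq_natDegree hq0, ← Nat.cast_add] at hfg
          have hlt := Nat.cast_lt.mp hfg
          exact (natDegree_lt_iff_degree_lt hq0).mp (by omega)
      refine ⟨⟨q, hqdeg⟩, ?_⟩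
      apply Subtype.ext
      show g + Z * q = f
      rw [← hq]; ring
  have h1 : Nat.card {f : Polynomial F // f.degree < (κ : ℕ) ∧ f.eval 0 = s ∧
      ∀ j, f.eval (u j) = v j} = Nat.card {q : Polynomial F // q.degree < ((κ - 1 - t : ℕ))} :=
    (Nat.card_congr (Equiv.ofBijective φ hbij)).symm
  rw [h1]
  have h2 : Nat.card {q : Polynomial F // q.degree < ((κ - 1 - t : ℕ))}
      = Nat.card (degreeLT F (κ - 1 - t)) :=
    Nat.card_congr (Equiv.subtypeEquivRight fun q => (mem_degreeLT).symm)
  rw [h2, Nat.card_congr (degreeLTEquiv F (κ - 1 - t)).toEquiv, Nat.card_eq_fintype_card]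
  simp
end

section
/- Let G be a commutative group (written multiplicatively), let q be a positive integer, and let g ∈ G satisfy g^q = 1. Let I' be a finite index set, and let msk, msk_i, β_i ∈ ℤ/qℤ (for i ∈ I') satisfy Σ_{i∈I'} β_i · msk_i = msk. Let h, a ∈ ℤ/qℤ, let E ∈ G, and set mpk = g^{msk}, c_key = E · mpk^{a + h}, and c_i = (g^{h} · g^{a})^{msk_i} for each i ∈ I', where exponentiation by an element of ℤ/qℤ means exponentiation by its canonical integer representative. Then c_key · (∏_{i∈I'} c_i^{β_i})^{-1} = E. (Correctness of Fluent's one-round consistency check and unmasking: the server recovers the decryptor's encoded temporary key Encode(k_u) = E from c_{key,u} and the decryption shares c_{i,u} exactly when it holds valid threshold decryption shares.) -/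
/-- Correctness of Fluent's one-round consistency check and unmasking: with
`mpk = g ^ msk`, `c_key = E * mpk ^ (a + h)` and decryption shares
`c i = (g ^ h * g ^ a) ^ (msk_i)` for Shamir shares satisfying `∑ i, β i * msk_i = msk`,
the server recovers `c_key * (∏ i, (c i) ^ (β i))⁻¹ = E`.  Exponentiation by an element of
`ℤ/qℤ` means exponentiation by its canonical integer representative, and `g ^ q = 1`. -/
theorem fluent_unmask_key {G : Type*} [CommGroup G] (q : ℕ) (hq : 0 < q)
    (g : G) (hg : g ^ q = 1) {ι : Type*} [Fintype ι]
    (msk : ZMod q) (mski β : ι → ZMod q) (hrec : ∑ i, β i * mski i = msk)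
    (h a : ZMod q) (E : G)
    (mpk : G) (hmpk : mpk = g ^ msk.val)
    (ckey : G) (hckey : ckey = E * mpk ^ (a + h).val)
    (c : ι → G) (hc : ∀ i, c i = (g ^ h.val * g ^ a.val) ^ (mski i).val) :
    ckey * (∏ i, (c i) ^ (β i).val)⁻¹ = E := by
  haveI : NeZero q := ⟨hq.ne'⟩
  have hpow : ∀ n : ℕ, g ^ n = g ^ ((n : ZMod q)).val := by
    intro n
    conv_lhs => rw [← Nat.div_add_mod n q]
    rw [pow_add, pow_mul, hg, one_pow, one_mul, ZMod.val_natCast]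
  have hpoweq : ∀ m n : ℕ, (m : ZMod q) = (n : ZMod q) → g ^ m = g ^ n := by
    intro m n hmn
    rw [hpow m, hpow n, hmn]
  have hprod : ∏ i, (c i) ^ (β i).val
      = g ^ (∑ i, (h.val + a.val) * (mski i).val * (β i).val) := by
    rw [← Finset.prod_pow_eq_pow_sum]
    refine Finset.prod_congr rfl fun i _ => ?_
    rw [hc i, ← pow_add, ← pow_mul, ← pow_mul, mul_assoc]
  have hkey : g ^ (∑ i, (h.val + a.val) * (mski i).val * (β i).val)
      = g ^ (msk.val * (a + h).val) := by
    apply hpoweq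
    push_cast [ZMod.natCast_val, ZMod.cast_id]
    rw [← hrec, Finset.sum_mul]
    apply Finset.sum_congr rfl
    intro i _
    ring
  rw [hckey, hmpk, ← pow_mul, hprod, hkey]
  group
end

section
/- Let n be a natural number, let A be an additive commutative group, let G be a simple graph on Fin n with neighbor sets A_i = N(i), let x, r : Fin n → A, and let m : Fin n → Fin n → A satisfy m i j = m j i for all i, j. For each i define the masked input y_i = x_i + r_i − Σ_{j ∈ N(i), j < i} m i j + Σ_{j ∈ N(i), i < j} m i j. Then Σ_{i} y_i = Σ_{i} x_i + Σ_{i} r_i. (Correctness of Fluent's aggregation when no client drops out: after subtracting the reconstructed self masks Σ_i r_i, the server obtains the sum of the private inputs, since all pairwise masks cancel.) -/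
/-- Correctness of Fluent's aggregation with no dropouts: if each client `i` submits
`y i = x i + r i - ∑_{j ∈ N(i), j < i} m i j + ∑_{j ∈ N(i), i < j} m i j` with symmetric
pairwise masks `m i j = m j i`, then `∑ i, y i = ∑ i, x i + ∑ i, r i`. -/
theorem fluent_aggregation_no_dropout (n : ℕ) {A : Type*} [AddCommGroup A]
    (G : SimpleGraph (Fin n)) [DecidableRel G.Adj]
    (x r : Fin n → A) (m : Fin n → Fin n → A) (hm : ∀ i j, m i j = m j i)
    (y : Fin n → A)
    (hy : ∀ i, y i = x i + r i
        - ∑ j ∈ (G.neighborFinset i).filter (· < i), m i j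
        + ∑ j ∈ (G.neighborFinset i).filter (i < ·), m i j) :
    ∑ i, y i = ∑ i, x i + ∑ i, r i := by
  have key : ∑ i, ∑ j ∈ (G.neighborFinset i).filter (i < ·), m i j
      = ∑ i, ∑ j ∈ (G.neighborFinset i).filter (· < i), m i j := by
    rw [Finset.sum_comm' (s := Finset.univ) (t' := Finset.univ)
      (t := fun i => (G.neighborFinset i).filter (i < ·))
      (s' := fun j => (G.neighborFinset j).filter (· < j))
      (by
        intro i j
        simp only [Finset.mem_univ, Finset.mem_filter, SimpleGraph.mem_neighborFinset,
          true_and, and_true]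
        constructor
        · rintro ⟨h, h'⟩; exact ⟨h.symm, h'⟩
        · rintro ⟨h, h'⟩; exact ⟨h.symm, h'⟩)]
    refine Finset.sum_congr rfl fun j _ => Finset.sum_congr rfl fun i _ => ?_
    exact hm i j
  simp only [hy]
  rw [Finset.sum_add_distrib, Finset.sum_sub_distrib, key, Finset.sum_add_distrib]
  abel
end

section
/- Let n be a natural number, let A be an additive commutative group, let G be a simple graph on Fin n with neighbor sets N(i), let x, r : Fin n → A, let m : Fin n → Fin n → A satisfy m i j = m j i, and let S and D be disjoint finite sets with S ∪ D = Fin n (survivors and dropouts). For each survivor i ∈ S let y_i = x_i + r_i − Σ_{j ∈ N(i), j < i} m i j + Σ_{j ∈ N(i), i < j} m i j. Then Σ_{i∈S} y_i = Σ_{i∈S} x_i + Σ_{i∈S} r_i + Σ_{i∈S} ( Σ_{j ∈ N(i)∩D, i < j} m i j − Σ_{j ∈ N(i)∩D, j < i} m i j ). (Correctness of Fluent's unmasking with dropouts: pairwise masks between two survivors cancel, so the server needs only the survivors' self masks and the pairwise masks between survivors and dropouts to recover Σ_{i∈S} x_i.) -/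
/-- Correctness of Fluent's unmasking with dropouts: with survivors `S` and dropouts `D`
partitioning the clients, the sum of the survivors' masked inputs equals the sum of their
private inputs, plus their self masks, plus the signed pairwise masks shared with dropped
neighbors (pairwise masks between two survivors cancel). -/
theorem fluent_aggregation_dropout (n : ℕ) {A : Type*} [AddCommGroup A]
    (G : SimpleGraph (Fin n)) [DecidableRel G.Adj]
    (x r : Fin n → A) (m : Fin n → Fin n → A) (hm : ∀ i j, m i j = m j i)
    (S D : Finset (Fin n)) (hSD : Disjoint S D) (hcover : S ∪ D = Finset.univ)
    (y : Fin n → A)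
    (hy : ∀ i, y i = x i + r i
        - ∑ j ∈ (G.neighborFinset i).filter (· < i), m i j
        + ∑ j ∈ (G.neighborFinset i).filter (i < ·), m i j) :
    ∑ i ∈ S, y i = ∑ i ∈ S, x i + ∑ i ∈ S, r i
      + ∑ i ∈ S, ((∑ j ∈ ((G.neighborFinset i) ∩ D).filter (i < ·), m i j)
        - ∑ j ∈ ((G.neighborFinset i) ∩ D).filter (· < i), m i j) := by
  have hsplit : ∀ (i : Fin n) (p : Fin n → Prop) [DecidablePred p],
      ∑ j ∈ (G.neighborFinset i).filter p, m i j
        = ∑ j ∈ ((G.neighborFinset i) ∩ S).filter p, m i j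
          + ∑ j ∈ ((G.neighborFinset i) ∩ D).filter p, m i j := by
    intro i p _
    rw [← Finset.sum_union]
    · congr 1
      rw [← Finset.filter_union, ← Finset.inter_union_distrib_left, hcover,
        Finset.inter_univ]
    · exact Finset.disjoint_filter_filter
        (hSD.mono Finset.inter_subset_right Finset.inter_subset_right)
  have hfS : ∀ (i : Fin n) (p : Fin n → Prop) [DecidablePred p],
      ((G.neighborFinset i) ∩ S).filter p = S.filter (fun j => G.Adj i j ∧ p j) := by
    intro i p _
    ext j
    simp only [Finset.mem_filter, Finset.mem_inter, SimpleGraph.mem_neighborFinset]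
    tauto
  have key : ∑ i ∈ S, ∑ j ∈ ((G.neighborFinset i) ∩ S).filter (i < ·), m i j
      = ∑ i ∈ S, ∑ j ∈ ((G.neighborFinset i) ∩ S).filter (· < i), m i j := by
    simp_rw [hfS, Finset.sum_filter]
    rw [Finset.sum_comm]
    refine Finset.sum_congr rfl fun j _ => Finset.sum_congr rfl fun i _ => ?_
    by_cases h : G.Adj i j ∧ i < j
    · rw [if_pos h, if_pos ⟨h.1.symm, h.2⟩, hm]
    · rw [if_neg h, if_neg (fun hc => h ⟨hc.1.symm, hc.2⟩)]
  simp_rw [hy]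
  rw [Finset.sum_add_distrib, Finset.sum_sub_distrib, Finset.sum_add_distrib,
    Finset.sum_sub_distrib]
  simp_rw [hsplit]
  rw [Finset.sum_add_distrib, Finset.sum_add_distrib, key]
  abel
end

section
/- Let G be a connected simple graph on a finite nonempty vertex type V, let A be an additive commutative group, and let w : V → A satisfy Σ_{i∈V} w_i = 0. Then there exists r : V → V → A such that r i j = − r j i for all i, j, r i j = 0 whenever i and j are not adjacent in G, and Σ_{j ∈ N(i)} r i j = w_i for every vertex i. (Surjectivity of the pairwise-masking map onto zero-sum vectors, the structural core of Lemma 1.) -/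
section Aux

variable {V : Type*} [Fintype V] (G : SimpleGraph V) [DecidableRel G.Adj]
  {A : Type*} [AddCommGroup A]

/-- Auxiliary predicate: `r` is an antisymmetric edge labeling with marginals `w`. -/
def MaskGood (r : V → V → A) (w : V → A) : Prop :=
  (∀ i j, r i j = - r j i) ∧ (∀ i j, ¬ G.Adj i j → r i j = 0) ∧
    ∀ i, ∑ j ∈ G.neighborFinset i, r i j = w i

lemma maskGood_zero : MaskGood G (fun _ _ => (0 : A)) (fun _ => 0) :=
  ⟨fun _ _ => by simp, fun _ _ _ => rfl, fun _ => by simp⟩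

lemma maskGood_add {r s : V → V → A} {w u : V → A}
    (hr : MaskGood G r w) (hs : MaskGood G s u) :
    MaskGood G (fun i j => r i j + s i j) (fun i => w i + u i) := by
  obtain ⟨h1, h2, h3⟩ := hr
  obtain ⟨g1, g2, g3⟩ := hs
  refine ⟨fun i j => ?_, fun i j h => ?_, fun i => ?_⟩
  · show r i j + s i j = -(r j i + s j i)
    rw [h1 i j, g1 i j]; abel
  · show r i j + s i j = 0
    rw [h2 i j h, g2 i j h]; simp
  · show ∑ j ∈ G.neighborFinset i, (r i j + s i j) = w i + u i
    rw [Finset.sum_add_distrib, h3 i, g3 i]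

lemma maskGood_congr {r : V → V → A} {w u : V → A} (hr : MaskGood G r w)
    (h : ∀ i, w i = u i) : MaskGood G r u :=
  ⟨hr.1, hr.2.1, fun i => (hr.2.2 i).trans (h i)⟩

open Classical in
lemma maskGood_edge {a b : V} (hab : G.Adj a b) (x : A) :
    MaskGood G (fun i j => if i = a ∧ j = b then x else if i = b ∧ j = a then -x else 0)
      (fun i => (if i = a then x else 0) - (if i = b then x else 0)) := by
  have hne : a ≠ b := hab.ne
  refine ⟨?_, ?_, ?_⟩
  · intro i j
    by_cases h1 : i = a ∧ j = b
    · obtain ⟨rfl, rfl⟩ := h1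
      simp [hne, hne.symm]
    · by_cases h2 : i = b ∧ j = a
      · obtain ⟨rfl, rfl⟩ := h2
        simp [hne, hne.symm]
      · have h3 : ¬ (j = b ∧ i = a) := fun ⟨u, v⟩ => h1 ⟨v, u⟩
        have h4 : ¬ (j = a ∧ i = b) := fun ⟨u, v⟩ => h2 ⟨v, u⟩
        simp [h1, h2, h3, h4]
  · intro i j h
    have h1 : ¬ (i = a ∧ j = b) := by rintro ⟨rfl, rfl⟩; exact h hab
    have h2 : ¬ (i = b ∧ j = a) := by rintro ⟨rfl, rfl⟩; exact h hab.symm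
    simp [h1, h2]
  · intro i
    by_cases hia : i = a
    · subst hia
      have : ∀ j ∈ G.neighborFinset i,
          (if i = i ∧ j = b then x else if i = b ∧ j = i then -x else 0)
          = if j = b then x else 0 := by
        intro j hj
        by_cases hjb : j = b <;> simp [hjb, hne]
      rw [Finset.sum_congr rfl this, Finset.sum_ite_eq' (G.neighborFinset i) b fun _ => x]
      simp [hne, hab]
    · by_cases hib : i = b
      · subst hib
        have : ∀ j ∈ G.neighborFinset i,
            (if i = a ∧ j = i then x else if i = i ∧ j = a then -x else 0)
            = if j = a then -x else 0 := by
          intro j hj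
          by_cases hja : j = a <;> simp [hja, hne.symm]
        rw [Finset.sum_congr rfl this, Finset.sum_ite_eq' (G.neighborFinset i) a fun _ => -x]
        simp [hne.symm, hab.symm]
      · have : ∀ j ∈ G.neighborFinset i,
            (if i = a ∧ j = b then x else if i = b ∧ j = a then -x else 0) = 0 := by
          intro j hj
          simp [hia, hib]
        rw [Finset.sum_congr rfl this]
        simp [hia, hib]

open Classical in
lemma maskGood_walk {a b : V} (x : A) (p : G.Walk a b) :
    ∃ r : V → V → A,
      MaskGood G r (fun i => (if i = a then x else 0) - (if i = b then x else 0)) := by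
  induction p with
  | nil =>
    exact ⟨fun _ _ => 0, maskGood_congr G (maskGood_zero G) (fun i => by simp)⟩
  | cons hac p ih =>
    obtain ⟨s, hs⟩ := ih
    refine ⟨_, maskGood_congr G (maskGood_add G (maskGood_edge G hac x) hs) (fun i => by abel)⟩

lemma maskGood_sum {ι : Type*} (s : Finset ι) (r : ι → V → V → A) (w : ι → V → A)
    (h : ∀ i ∈ s, MaskGood G (r i) (w i)) :
    MaskGood G (fun a b => ∑ i ∈ s, r i a b) (fun a => ∑ i ∈ s, w i a) := by
  induction s using Finset.cons_induction with
  | empty => exact maskGood_congr G (maskGood_zero G) (fun i => by simp)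
  | cons j t hj ih =>
    have := maskGood_add G (h j (Finset.mem_cons_self j t))
      (ih fun i hi => h i (Finset.mem_cons_of_mem hi))
    have e1 : (fun a b => ∑ i ∈ Finset.cons j t hj, r i a b)
        = fun a b => r j a b + ∑ i ∈ t, r i a b := by
      funext a b; rw [Finset.sum_cons]
    have e2 : (fun a => ∑ i ∈ Finset.cons j t hj, w i a)
        = fun a => w j a + ∑ i ∈ t, w i a := by
      funext a; rw [Finset.sum_cons]
    rw [e1, e2]
    exact this

end Aux

/-- Surjectivity of the pairwise-masking map onto zero-sum vectors: for a connected simple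
graph `G` on a finite nonempty vertex type and any `w : V → A` with `∑ i, w i = 0`, there is
an antisymmetric edge labeling `r` (vanishing on non-adjacent pairs) whose vertex marginals
`∑_{j ∈ N(i)} r i j` equal `w i` for every vertex `i`. -/
theorem masking_map_surjective {V : Type*} [Fintype V] [Nonempty V]
    (G : SimpleGraph V) [DecidableRel G.Adj] (hG : G.Connected)
    {A : Type*} [AddCommGroup A] (w : V → A) (hw : ∑ i, w i = 0) :
    ∃ r : V → V → A, (∀ i j, r i j = - r j i) ∧ (∀ i j, ¬ G.Adj i j → r i j = 0) ∧
      ∀ i, ∑ j ∈ G.neighborFinset i, r i j = w i := by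
  classical
  obtain ⟨v0⟩ := ‹Nonempty V›
  have hstep : ∀ i : V, ∃ r : V → V → A,
      MaskGood G r (fun j => (if j = i then w i else 0) - (if j = v0 then w i else 0)) := by
    intro i
    obtain ⟨p⟩ := hG.preconnected i v0
    exact maskGood_walk G (w i) p
  choose r hr using hstep
  have htot := maskGood_sum G Finset.univ r _ (fun i _ => hr i)
  refine ⟨fun a b => ∑ i, r i a b, ?_, ?_, ?_⟩
  · exact htot.1
  · exact htot.2.1
  · intro i
    have := htot.2.2 i
    rw [this]
    have h1 : ∑ j : V, ((if i = j then w j else 0) - (if i = v0 then w j else 0))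
        = w i - (if i = v0 then ∑ j, w j else 0) := by
      rw [Finset.sum_sub_distrib, Finset.sum_ite_eq Finset.univ i w]
      simp
    rw [hw] at h1; simpa using h1
end
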